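/- Let n ≥ 1, let ψ be a unit vector in ℂⁿ, let U be an n×n unitary matrix over ℂ, let V₁, V₂ be arbitrary n×n complex matrices, and let p ∈ [0,1]. Define ε₁ = V₁ψ − Uψ, ε₂ = V₂ψ − Uψ, and εₘ = p·ε₁ + (1−p)·ε₂, and suppose ‖ε₁‖ ≤ a₁, ‖ε₂‖ ≤ a₂, and ‖εₘ‖ ≤ b (Euclidean norms). Then |p·‖V₁ψ‖² + (1−p)·‖V₂ψ‖² − 1| ≤ 2b + p·a₁² + (1−p)·a₂². -/

import Mathlib

/-- The Euclidean norm of a vector in `ℂⁿ`. -/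
noncomputable def eucNorm {n : ℕ} (v : Fin n → ℂ) : ℝ :=
  Real.sqrt (∑ i, ‖v i‖ ^ 2)

/-!
Write `Vᵢψ = Uψ + εᵢ` with `‖Uψ‖ = 1`. Expanding the squares, the cross terms are linear in `εᵢ`
and so combine into `p ‖V₁ψ‖² + (1 - p) ‖V₂ψ‖² - 1 = 2 Re ⟪Uψ, εₘ⟫ + p ‖ε₁‖² + (1 - p) ‖ε₂‖²`;
Cauchy–Schwarz bounds the first term by `2 ‖εₘ‖`.
-/

open scoped InnerProductSpace
open RCLike

section ConvexCombination

variable {𝕜 E : Type*} [RCLike 𝕜] [NormedAddCommGroup E] [InnerProductSpace 𝕜 E]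

theorem convex_comb_norm_add_sq_sub_one {u : E} (hu : ‖u‖ = 1) (e₁ e₂ : E) (p : ℝ) :
    p * ‖u + e₁‖ ^ 2 + (1 - p) * ‖u + e₂‖ ^ 2 - 1 =
      2 * re ⟪u, (p : 𝕜) • e₁ + ((1 - p : ℝ) : 𝕜) • e₂⟫_𝕜 +
        (p * ‖e₁‖ ^ 2 + (1 - p) * ‖e₂‖ ^ 2) := by
  simp only [@norm_add_sq 𝕜, hu, inner_add_right, inner_smul_real_right, map_add, smul_re]
  ring

theorem abs_convex_comb_norm_add_sq_sub_one_le {u : E} (hu : ‖u‖ = 1) (e₁ e₂ : E) {p : ℝ}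
    (hp0 : 0 ≤ p) (hp1 : p ≤ 1) :
    |p * ‖u + e₁‖ ^ 2 + (1 - p) * ‖u + e₂‖ ^ 2 - 1| ≤
      2 * ‖(p : 𝕜) • e₁ + ((1 - p : ℝ) : 𝕜) • e₂‖ + (p * ‖e₁‖ ^ 2 + (1 - p) * ‖e₂‖ ^ 2) := by
  have hre (e : E) : |re ⟪u, e⟫_𝕜| ≤ ‖e‖ := by
    simpa [hu] using (abs_re_le_norm _).trans (norm_inner_le_norm (𝕜 := 𝕜) u e)
  rw [convex_comb_norm_add_sq_sub_one (𝕜 := 𝕜) hu]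
  refine (abs_add_le _ _).trans (add_le_add ?_ (abs_of_nonneg ?_).le)
  · rw [abs_mul, abs_two]
    exact mul_le_mul_of_nonneg_left (hre _) zero_le_two
  · have hp1' : 0 ≤ 1 - p := sub_nonneg.2 hp1
    positivity

end ConvexCombination

theorem eucNorm_eq_norm_toLp {n : ℕ} (v : Fin n → ℂ) : eucNorm v = ‖WithLp.toLp 2 v‖ := by
  rw [EuclideanSpace.norm_eq]; rfl

theorem norm_toLp_mulVec_of_mem_unitaryGroup {n : Type*} [Fintype n] [DecidableEq n]
    {𝕜 : Type*} [RCLike 𝕜] {U : Matrix n n 𝕜}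
    (hU : U ∈ Matrix.unitaryGroup n 𝕜) (v : n → 𝕜) :
    ‖WithLp.toLp 2 (U.mulVec v)‖ = ‖WithLp.toLp 2 v‖ := by
  have hsq : ‖WithLp.toLp 2 (U.mulVec v)‖ ^ 2 = ‖WithLp.toLp 2 v‖ ^ 2 := by
    rw [← inner_self_eq_norm_sq (𝕜 := 𝕜), ← inner_self_eq_norm_sq (𝕜 := 𝕜),
      EuclideanSpace.inner_toLp_toLp, EuclideanSpace.inner_toLp_toLp, Matrix.star_mulVec,
      dotProduct_comm, ← Matrix.dotProduct_mulVec, Matrix.mulVec_mulVec,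
      ← Matrix.star_eq_conjTranspose, (Matrix.mem_unitaryGroup_iff').1 hU, Matrix.one_mulVec,
      dotProduct_comm]
  exact (pow_left_inj₀ (norm_nonneg _) (norm_nonneg _) two_ne_zero).1 hsq

theorem mixing_channel_trace_bound_general {n : ℕ}
    (ψ : Fin n → ℂ) (hψ : eucNorm ψ = 1)
    (U : Matrix (Fin n) (Fin n) ℂ) (hU : U ∈ Matrix.unitaryGroup (Fin n) ℂ)
    (V₁ V₂ : Matrix (Fin n) (Fin n) ℂ)
    (p a₁ a₂ b : ℝ) (hp0 : 0 ≤ p) (hp1 : p ≤ 1)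
    (ε₁ ε₂ εm : Fin n → ℂ)
    (hε₁ : ε₁ = V₁.mulVec ψ - U.mulVec ψ)
    (hε₂ : ε₂ = V₂.mulVec ψ - U.mulVec ψ)
    (hεm : εm = p • ε₁ + (1 - p) • ε₂)
    (ha₁ : eucNorm ε₁ ≤ a₁) (ha₂ : eucNorm ε₂ ≤ a₂) (hb : eucNorm εm ≤ b) :
    |p * (eucNorm (V₁.mulVec ψ)) ^ 2 + (1 - p) * (eucNorm (V₂.mulVec ψ)) ^ 2 - 1|
      ≤ 2 * b + p * a₁ ^ 2 + (1 - p) * a₂ ^ 2 := by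
  have hV₁ : V₁.mulVec ψ = U.mulVec ψ + ε₁ := by rw [hε₁, add_sub_cancel]
  have hV₂ : V₂.mulVec ψ = U.mulVec ψ + ε₂ := by rw [hε₂, add_sub_cancel]
  have hmix : WithLp.toLp 2 εm =
      (p : ℂ) • WithLp.toLp 2 ε₁ + ((1 - p : ℝ) : ℂ) • WithLp.toLp 2 ε₂ := by
    rw [hεm, ← Complex.coe_smul, ← Complex.coe_smul]
    rfl
  have hU₁ : ‖WithLp.toLp 2 (U.mulVec ψ)‖ = 1 := by
    rw [norm_toLp_mulVec_of_mem_unitaryGroup hU, ← eucNorm_eq_norm_toLp, hψ]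
  have hp1' : 0 ≤ 1 - p := sub_nonneg.2 hp1
  simp only [eucNorm_eq_norm_toLp] at ha₁ ha₂ hb ⊢
  rw [hV₁, hV₂, WithLp.toLp_add, WithLp.toLp_add, add_assoc (2 * b)]
  refine (abs_convex_comb_norm_add_sq_sub_one_le (𝕜 := ℂ) hU₁ _ _ hp0 hp1).trans ?_
  rw [hmix] at hb
  gcongr
  exact hb

/-- Trace estimate from the proof of the mixing lemma: the trace of the
unnormalized mixed-channel output deviates from `1` by at most
`2b + p a₁² + (1−p) a₂²`. -/
theorem mixing_channel_trace_bound {n : ℕ} (hn : 1 ≤ n)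
    (ψ : Fin n → ℂ) (hψ : eucNorm ψ = 1)
    (U : Matrix (Fin n) (Fin n) ℂ) (hU : U ∈ Matrix.unitaryGroup (Fin n) ℂ)
    (V₁ V₂ : Matrix (Fin n) (Fin n) ℂ)
    (p a₁ a₂ b : ℝ) (hp0 : 0 ≤ p) (hp1 : p ≤ 1)
    (ε₁ ε₂ εm : Fin n → ℂ)
    (hε₁ : ε₁ = V₁.mulVec ψ - U.mulVec ψ)
    (hε₂ : ε₂ = V₂.mulVec ψ - U.mulVec ψ)
    (hεm : εm = p • ε₁ + (1 - p) • ε₂)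
    (ha₁ : eucNorm ε₁ ≤ a₁) (ha₂ : eucNorm ε₂ ≤ a₂) (hb : eucNorm εm ≤ b) :
    |p * (eucNorm (V₁.mulVec ψ)) ^ 2 + (1 - p) * (eucNorm (V₂.mulVec ψ)) ^ 2 - 1|
      ≤ 2 * b + p * a₁ ^ 2 + (1 - p) * a₂ ^ 2 :=
  mixing_channel_trace_bound_general ψ hψ U hU V₁ V₂ p a₁ a₂ b hp0 hp1 ε₁ ε₂ εm hε₁ hε₂ hεm ha₁ ha₂
    hb
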